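/- arXiv:2204.05163 — 3 statements merged into one kernel-verified Lean document; each statement's English description precedes it below -/
import Mathlib

section
/- Let m ≥ 1 be an integer, let I be a nonempty subset of {1,…,m} and let i ∈ I. Let f : ℂ^m → ℂ be a Lebesgue-measurable function and suppose there exist N ∈ ℕ and C ≥ 0 such that |f(w)| ≤ C · L(w)^{-N} for all w ∈ P_m. Then for every fixed z ∈ P_m, the function w ↦ |z_i − w_i| · |f(w)| / ( ‖z − w‖^{2m} · |w_I| ) is integrable on P_m with respect to Lebesgue measure (i.e., the integral ∫_{P_m} |z_i − w_i| · |f(w)| / ( ‖z − w‖^{2m} · |w_I| ) dλ(w) is finite). -/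
/-!
On `P_m` every factor `-log |w_j|` is at least `log 2`, so `L ≥ (log 2)^m` and `f` is bounded.
With `e = 2 - 1/m` we have `1 + e m = 2m`, and since every `|z_j - w_j| ≤ ‖z - w‖`,
`|z_i - w_i| / ‖z - w‖^{2m} ≤ ∏_j |z_j - w_j|^{-e}`. Hence the integrand is dominated by a
constant times `∏_j |z_j - w_j|^{-e} |w_j|^{-d_j}`, where `d_j = 1` for `j ∈ I` and `d_j = 0`
otherwise. This is a product of functions of one complex variable, each locally integrable on `ℂ`:
the exponents `e` and `d_j` are below the real dimension `2`, and as `z_j ≠ 0` the two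
singularities are apart, so near each one the other factor is bounded.
-/

open MeasureTheory Finset

noncomputable section

/-- The punctured polydisc `{w ∈ ℂ^m : 0 < |w_j| ≤ 1/2 for all j}`. -/
def PD (m : ℕ) : Set (Fin m → ℂ) :=
  {w | ∀ j, 0 < ‖w j‖ ∧ ‖w j‖ ≤ 1 / 2}

/-- `L(w) = ∏_j (−log |w_j|)`. -/
def Lfun {m : ℕ} (w : Fin m → ℂ) : ℝ :=
  ∏ j : Fin m, (-Real.log (‖w j‖))

/-- `|w_S| = ∏_{j ∈ S} |w_j|`. -/
def prodAbs {m : ℕ} (S : Finset (Fin m)) (w : Fin m → ℂ) : ℝ :=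
  ∏ j ∈ S, ‖w j‖

/-- The Euclidean norm `‖z − w‖ = (∑_j |z_j − w_j|²)^{1/2}`. -/
def eDist {m : ℕ} (z w : Fin m → ℂ) : ℝ :=
  Real.sqrt (∑ j : Fin m, ‖z j - w j‖ ^ 2)

theorem two_sub_one_div_mem_Ico {n : ℕ} (hn : 0 < n) : (2 - 1 / n : ℝ) ∈ Set.Ico 0 2 := by
  have hn' : (1 : ℝ) ≤ n := by exact_mod_cast hn
  constructor
  · linarith [div_le_one_of_le₀ hn' (by positivity : (0 : ℝ) ≤ n)]
  · linarith [(by positivity : (0 : ℝ) < 1 / n)]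

theorem rpow_neg_mul_rpow_neg_le {a b ρ e d : ℝ} (ha : 0 ≤ a) (hb : 0 ≤ b) (hρ : 0 < ρ)
    (hab : 2 * ρ ≤ a + b) (he : 0 ≤ e) (hd : 0 ≤ d) :
    a ^ (-e) * b ^ (-d) ≤ ρ ^ (-d) * a ^ (-e) + ρ ^ (-e) * b ^ (-d) := by
  have ha' : 0 ≤ a ^ (-e) := Real.rpow_nonneg ha _
  have hb' : 0 ≤ b ^ (-d) := Real.rpow_nonneg hb _
  rcases le_total ρ b with hρb | hbρ
  · have := Real.rpow_le_rpow_of_nonpos hρ hρb (neg_nonpos.2 hd)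
    nlinarith [Real.rpow_nonneg hρ.le (-e)]
  · have := Real.rpow_le_rpow_of_nonpos hρ (by linarith : ρ ≤ a) (neg_nonpos.2 he)
    nlinarith [Real.rpow_nonneg hρ.le (-d)]

section HaarSingularity

variable {E : Type*} [NormedAddCommGroup E] [NormedSpace ℝ E] [FiniteDimensional ℝ E]
  [MeasurableSpace E] [BorelSpace E] {μ : Measure E} [μ.IsAddHaarMeasure]

theorem locallyIntegrable_norm_sub_rpow_neg (hE : 1 ≤ Module.finrank ℝ E) (c : E) {e : ℝ}
    (he : e < Module.finrank ℝ E) : LocallyIntegrable (fun x => ‖x - c‖ ^ (-e)) μ := by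
  have h₀ : LocallyIntegrable (fun x : E => ‖x‖ ^ (-e)) μ :=
    locallyIntegrable_of_norm_le_rpow (C := 1) hE he
      (ae_of_all _ fun x => by rw [one_mul, Real.norm_of_nonneg (by positivity)])
      (by fun_prop : Measurable fun x : E => ‖x‖ ^ (-e)).aestronglyMeasurable
  rw [← map_sub_right_eq_self μ c] at h₀
  exact (locallyIntegrable_map_homeomorph (Homeomorph.subRight c)).1 h₀

theorem locallyIntegrable_norm_sub_rpow_neg_mul_norm_rpow_neg (hE : 1 ≤ Module.finrank ℝ E)
    {c : E} (hc : c ≠ 0) {e d : ℝ} (he₀ : 0 ≤ e) (he : e < Module.finrank ℝ E)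
    (hd₀ : 0 ≤ d) (hd : d < Module.finrank ℝ E) :
    LocallyIntegrable (fun x => ‖c - x‖ ^ (-e) * ‖x‖ ^ (-d)) μ := by
  set ρ := ‖c‖ / 2
  have hρ : 0 < ρ := by positivity
  have hsum : LocallyIntegrable
      (fun x => ρ ^ (-d) * ‖x - c‖ ^ (-e) + ρ ^ (-e) * ‖x - 0‖ ^ (-d)) μ :=
    ((locallyIntegrable_norm_sub_rpow_neg hE c he).smul (ρ ^ (-d))).add
      ((locallyIntegrable_norm_sub_rpow_neg hE 0 hd).smul (ρ ^ (-e)))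
  refine hsum.mono (by fun_prop : Measurable _).aestronglyMeasurable (ae_of_all _ fun x => ?_)
  have hsplit : 2 * ρ ≤ ‖c - x‖ + ‖x‖ := by
    simpa [ρ, mul_div_cancel₀] using norm_le_norm_sub_add c x
  rw [Real.norm_of_nonneg (by positivity), Real.norm_of_nonneg (by positivity), norm_sub_rev x c,
    sub_zero]
  exact rpow_neg_mul_rpow_neg_le (norm_nonneg _) (norm_nonneg _) hρ hsplit he₀ hd₀

end HaarSingularity

theorem integrableOn_univ_pi_prod {ι X : Type*} [Fintype ι] [MeasurableSpace X]
    {μ : ι → Measure X} [∀ j, SigmaFinite (μ j)] {s : ι → Set X} {g : ι → X → ℝ}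
    (hg : ∀ j, IntegrableOn (g j) (s j) (μ j)) :
    IntegrableOn (fun x => ∏ j, g j (x j)) (Set.univ.pi s) (Measure.pi μ) := by
  rw [IntegrableOn, Measure.restrict_pi_pi]
  exact Integrable.fintype_prod hg

theorem div_rpow_le_prod_rpow_neg {ι : Type*} [Fintype ι] {a : ι → ℝ} {E e : ℝ}
    (ha : ∀ j, 0 < a j) (haE : ∀ j, a j ≤ E) (he : 0 ≤ e) (i : ι) :
    a i / E ^ (1 + e * Fintype.card ι) ≤ ∏ j, a j ^ (-e) := by
  have hE : 0 < E := (ha i).trans_le (haE i)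
  have hprod : ∏ j, a j ^ e ≤ (E ^ e) ^ Fintype.card ι := by
    rw [← Finset.card_univ, ← Finset.prod_const]
    exact Finset.prod_le_prod (fun j _ => (Real.rpow_pos_of_pos (ha j) e).le)
      fun j _ => Real.rpow_le_rpow (ha j).le (haE j) he
  have hpow : E ^ (1 + e * Fintype.card ι) = E * (E ^ e) ^ Fintype.card ι := by
    rw [Real.rpow_add hE, Real.rpow_one, Real.rpow_mul hE.le, Real.rpow_natCast]
  simp_rw [Real.rpow_neg (ha _).le]
  rw [Finset.prod_inv_distrib, div_le_iff₀ (Real.rpow_pos_of_pos hE _), hpow, ← div_eq_inv_mul,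
    le_div_iff₀ (Finset.prod_pos fun j _ => Real.rpow_pos_of_pos (ha j) e)]
  exact mul_le_mul (haE i) hprod
    (Finset.prod_nonneg fun j _ => (Real.rpow_pos_of_pos (ha j) e).le) hE.le

theorem PD_eq_pi (m : ℕ) :
    PD m = Set.univ.pi fun _ => Metric.closedBall (0 : ℂ) (1 / 2) \ {0} := by
  ext w
  simp [PD, and_comm]

theorem measurableSet_PD (m : ℕ) : MeasurableSet (PD m) := by
  rw [PD_eq_pi]
  exact MeasurableSet.univ_pi fun _ => measurableSet_closedBall.diff (measurableSet_singleton 0)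

theorem pow_log_two_le_Lfun {m : ℕ} {w : Fin m → ℂ} (hw : w ∈ PD m) :
    Real.log 2 ^ m ≤ Lfun w := by
  calc Real.log 2 ^ m = ∏ _j : Fin m, Real.log 2 := by simp
    _ ≤ Lfun w := Finset.prod_le_prod (fun _ _ => (Real.log_pos one_lt_two).le) fun j _ => by
      have := Real.log_le_log (hw j).1 (hw j).2
      rw [one_div, Real.log_inv] at this
      linarith

theorem norm_sub_le_eDist {m : ℕ} (z w : Fin m → ℂ) (j : Fin m) :
    ‖z j - w j‖ ≤ eDist z w :=
  Real.le_sqrt_of_sq_le <|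
    Finset.single_le_sum (f := fun j => ‖z j - w j‖ ^ 2) (fun _ _ => by positivity) (mem_univ j)

theorem norm_sub_div_eDist_pow_le {m : ℕ} {z w : Fin m → ℂ} (hne : ∀ j, w j ≠ z j)
    (i : Fin m) :
    ‖z i - w i‖ / eDist z w ^ (2 * m) ≤ ∏ j, ‖z j - w j‖ ^ (-(2 - 1 / m : ℝ)) := by
  have key := div_rpow_le_prod_rpow_neg (a := fun j => ‖z j - w j‖) (E := eDist z w)
    (e := 2 - 1 / m) (fun j => norm_pos_iff.2 (sub_ne_zero.2 (hne j).symm))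
    (norm_sub_le_eDist z w) (two_sub_one_div_mem_Ico i.pos).1 i
  have hexp : 1 + (2 - 1 / m : ℝ) * Fintype.card (Fin m) = ((2 * m : ℕ) : ℝ) := by
    have hm : (m : ℝ) ≠ 0 := by exact_mod_cast i.pos.ne'
    rw [Fintype.card_fin]; push_cast; field_simp; ring
  rwa [hexp, Real.rpow_natCast] at key

theorem inv_prodAbs_eq_prod_rpow {m : ℕ} (I : Finset (Fin m)) (w : Fin m → ℂ) :
    (prodAbs I w)⁻¹ = ∏ j, ‖w j‖ ^ (-(if j ∈ I then 1 else 0 : ℝ)) := by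
  simp [prodAbs, apply_ite, Finset.prod_ite_mem, Real.rpow_neg_one]

theorem integrableOn_PD_prod_rpow_neg {m : ℕ} {z : Fin m → ℂ} (hz : ∀ j, z j ≠ 0)
    {e : ℝ} {d : Fin m → ℝ} (he : e ∈ Set.Ico 0 2) (hd : ∀ j, d j ∈ Set.Ico 0 2) :
    IntegrableOn (fun w => ∏ j, ‖z j - w j‖ ^ (-e) * ‖w j‖ ^ (-d j)) (PD m) := by
  rw [PD_eq_pi, volume_pi]
  refine integrableOn_univ_pi_prod (g := fun j x => ‖z j - x‖ ^ (-e) * ‖x‖ ^ (-d j))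
    fun j => ?_
  have hloc := locallyIntegrable_norm_sub_rpow_neg_mul_norm_rpow_neg (μ := volume) (by simp)
    (hz j) he.1 (by simpa using he.2) (hd j).1 (by simpa using (hd j).2)
  exact (hloc.integrableOn_isCompact (isCompact_closedBall 0 (1 / 2))).mono_set Set.sdiff_subset

theorem statement1_general (m : ℕ)
    (I : Finset (Fin m)) (i : Fin m)
    (f : (Fin m → ℂ) → ℂ) (hf : Measurable f)
    (N : ℕ) (C : ℝ) (hC : 0 ≤ C)
    (hbound : ∀ w ∈ PD m, ‖f w‖ ≤ C * Lfun w ^ (-(N : ℝ)))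
    (z : Fin m → ℂ) (hz : z ∈ PD m) :
    IntegrableOn
      (fun w => ‖z i - w i‖ * ‖f w‖ /
        (eDist z w ^ (2 * m) * prodAbs I w)) (PD m) volume := by
  set e : ℝ := 2 - 1 / m
  set d : Fin m → ℝ := fun j => if j ∈ I then 1 else 0
  set K := C * (Real.log 2 ^ m) ^ (-(N : ℝ))
  have hdom :
      IntegrableOn (fun w => K * ∏ j, ‖z j - w j‖ ^ (-e) * ‖w j‖ ^ (-d j)) (PD m) :=
    (integrableOn_PD_prod_rpow_neg (fun j => norm_pos_iff.1 (hz j).1)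
      (two_sub_one_div_mem_Ico i.pos) fun j => by simp only [d]; split_ifs <;> norm_num).const_mul K
  have hne : ∀ᵐ w : Fin m → ℂ, ∀ j, w j ≠ z j :=
    ae_all_iff.2 fun j => by
      rw [volume_pi]; exact Measure.ae_eval_ne (α := fun _ => ℂ) (fun _ => volume) j (z j)
  refine hdom.mono' (by unfold eDist prodAbs; fun_prop : Measurable _).aestronglyMeasurable ?_
  filter_upwards [ae_restrict_of_ae hne, ae_restrict_mem (measurableSet_PD m)] with w hwz hw
  have hfK : ‖f w‖ ≤ K := (hbound w hw).trans <| mul_le_mul_of_nonneg_left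
    (Real.rpow_le_rpow_of_nonpos (by positivity) (pow_log_two_le_Lfun hw) (by simp)) hC
  calc ‖‖z i - w i‖ * ‖f w‖ / (eDist z w ^ (2 * m) * prodAbs I w)‖
      = ‖z i - w i‖ / eDist z w ^ (2 * m) * ‖f w‖ * (prodAbs I w)⁻¹ := by
        rw [Real.norm_of_nonneg (by unfold eDist prodAbs; positivity)]; ring
    _ ≤ (∏ j, ‖z j - w j‖ ^ (-e)) * K * ∏ j, ‖w j‖ ^ (-d j) := by
        rw [inv_prodAbs_eq_prod_rpow]
        gcongr
        exact norm_sub_div_eDist_pow_le hwz i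
    _ = K * ∏ j, ‖z j - w j‖ ^ (-e) * ‖w j‖ ^ (-d j) := by
        rw [Finset.prod_mul_distrib]; ring

theorem statement1 (m : ℕ) (hm : 1 ≤ m)
    (I : Finset (Fin m)) (hI : I.Nonempty) (i : Fin m) (hi : i ∈ I)
    (f : (Fin m → ℂ) → ℂ) (hf : Measurable f)
    (N : ℕ) (C : ℝ) (hC : 0 ≤ C)
    (hbound : ∀ w ∈ PD m, ‖f w‖ ≤ C * Lfun w ^ (-(N : ℝ)))
    (z : Fin m → ℂ) (hz : z ∈ PD m) :
    IntegrableOn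
      (fun w => ‖z i - w i‖ * ‖f w‖ /
        (eDist z w ^ (2 * m) * prodAbs I w)) (PD m) volume :=
  statement1_general m I i f hf N C hC hbound z hz

end
end

section
/- Let N ≥ 0 be an integer and let z ∈ ℂ with 0 < |z| ≤ 1/2. Then ∫_{ {w ∈ ℂ : 0 < |w| ≤ |z|/2} } (−log|w|)^{−N} / ( |z − w| · |w| ) dλ(w) ≤ 2π · (−log|z|)^{−N}. -/
/-!
On the region of integration `|z - w| ≥ |z|/2` and `|w| ≤ |z| < 1`, so the integrand is at most
`(2/|z|) (-log|z|)^{-N} |w|⁻¹`. In polar coordinates `∫_{|w| ≤ r} |w|⁻¹ dλ = 2πr`, and `r = |z|/2`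
gives exactly `2π (-log|z|)^{-N}`.
-/

open MeasureTheory Set Metric

lemma locallyIntegrable_inv_norm {E : Type*} [NormedAddCommGroup E] [NormedSpace ℝ E]
    [FiniteDimensional ℝ E] [MeasurableSpace E] [BorelSpace E] (μ : Measure E)
    [μ.IsAddHaarMeasure] (hE : 2 ≤ Module.finrank ℝ E) :
    LocallyIntegrable (fun x : E ↦ ‖x‖⁻¹) μ := by
  refine locallyIntegrable_of_norm_le_rpow (C := 1) (α := 1) (by omega) (by exact_mod_cast hE)
    (.of_forall fun x ↦ ?_) (by fun_prop)
  simp [Real.rpow_neg_one]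

lemma integrableOn_inv_norm_punctured_disc (r : ℝ) :
    IntegrableOn (fun w : ℂ ↦ ‖w‖⁻¹) {w : ℂ | 0 < ‖w‖ ∧ ‖w‖ ≤ r} :=
  ((locallyIntegrable_inv_norm volume (by simp)).integrableOn_isCompact
    (isCompact_closedBall 0 r)).mono_set fun w hw ↦ by simpa using hw.2

lemma integral_inv_norm_punctured_disc {r : ℝ} (hr : 0 ≤ r) :
    ∫ w in {w : ℂ | 0 < ‖w‖ ∧ ‖w‖ ≤ r}, ‖w‖⁻¹ = 2 * Real.pi * r := by
  have hpre : {w : ℂ | 0 < ‖w‖ ∧ ‖w‖ ≤ r} = (‖·‖) ⁻¹' Ioc 0 r := rfl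
  have hball : volume.real (ball (0 : ℂ) 1) = Real.pi := by
    simp [Measure.real, Complex.volume_ball]
  have hradial : ∫ y in Ioi (0 : ℝ), y * (Ioc 0 r).indicator (·⁻¹) y = r := by
    rw [← integral_indicator measurableSet_Ioi,
      integral_congr_ae (g := (Ioc 0 r).indicator 1) (.of_forall fun y ↦ ?_)]
    · simp [integral_indicator measurableSet_Ioc, hr]
    by_cases hy : y ∈ Ioc 0 r
    · simp [hy, hy.1, hy.1.ne']
    · simp [indicator, hy]
  have hpolar := integral_fun_norm_addHaar (volume : Measure ℂ) ((Ioc 0 r).indicator (·⁻¹))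
  norm_num only [Complex.finrank_real_complex, hball, nsmul_eq_mul, smul_eq_mul, pow_one,
    hradial, ← mul_assoc] at hpolar
  -- the indicator of `(‖·‖) ⁻¹' Ioc 0 r` is definitionally the indicator of `Ioc 0 r` at `‖w‖`
  rwa [← integral_indicator (hpre ▸ measurableSet_Ioc.preimage continuous_norm.measurable)]

lemma neg_log_rpow_nonneg {t : ℝ} (ht₀ : 0 ≤ t) (ht₁ : t ≤ 1) (p : ℝ) :
    0 ≤ (-Real.log t) ^ p :=
  Real.rpow_nonneg (neg_nonneg.2 (Real.log_nonpos ht₀ ht₁)) p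

lemma neg_log_rpow_le_of_le {s t p : ℝ} (hs : 0 < s) (hst : s ≤ t) (ht : t < 1) (hp : p ≤ 0) :
    (-Real.log s) ^ p ≤ (-Real.log t) ^ p :=
  Real.rpow_le_rpow_of_nonpos (neg_pos.2 (Real.log_neg (hs.trans_le hst) ht))
    (neg_le_neg (Real.log_le_log hs hst)) hp

lemma neg_log_rpow_div_le {E : Type*} [SeminormedAddCommGroup E] {z w : E} {p : ℝ}
    (hp : p ≤ 0) (hz : ‖z‖ < 1) (hw₀ : 0 < ‖w‖) (hwz : ‖w‖ ≤ ‖z‖ / 2) :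
    (-Real.log ‖w‖) ^ p / (‖z - w‖ * ‖w‖) ≤ 2 / ‖z‖ * (-Real.log ‖z‖) ^ p * ‖w‖⁻¹ := by
  have hzw : ‖z‖ / 2 ≤ ‖z - w‖ := by linarith [norm_sub_norm_le z w]
  calc (-Real.log ‖w‖) ^ p / (‖z - w‖ * ‖w‖)
      ≤ (-Real.log ‖z‖) ^ p / (‖z‖ / 2 * ‖w‖) := by
        refine div_le_div₀ (neg_log_rpow_nonneg (norm_nonneg z) hz.le p)
          (neg_log_rpow_le_of_le hw₀ (by linarith) hz hp) (mul_pos (by linarith) hw₀) ?_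
        gcongr
    _ = 2 / ‖z‖ * (-Real.log ‖z‖) ^ p * ‖w‖⁻¹ := by field_simp

theorem statement8 (N : ℕ) (z : ℂ) (hz0 : 0 < ‖z‖) (hz : ‖z‖ ≤ 1 / 2) :
    (∫ w in {w : ℂ | 0 < ‖w‖ ∧ ‖w‖ ≤ ‖z‖ / 2},
        (-Real.log (‖w‖)) ^ (-(N : ℝ)) / (‖z - w‖ * ‖w‖)) ≤
      2 * Real.pi * (-Real.log (‖z‖)) ^ (-(N : ℝ)) := by
  set T := {w : ℂ | 0 < ‖w‖ ∧ ‖w‖ ≤ ‖z‖ / 2}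
  have hT : MeasurableSet T := measurableSet_Ioc.preimage continuous_norm.measurable
  have hz1 : ‖z‖ < 1 := by linarith
  have hnonneg : ∀ w ∈ T, 0 ≤ (-Real.log ‖w‖) ^ (-(N : ℝ)) / (‖z - w‖ * ‖w‖) := fun w hw ↦
    div_nonneg (neg_log_rpow_nonneg (norm_nonneg w) (by linarith [hw.2]) _) (by positivity)
  calc _ ≤ ∫ w in T, 2 / ‖z‖ * (-Real.log ‖z‖) ^ (-(N : ℝ)) * ‖w‖⁻¹ :=
        integral_mono_of_nonneg ((ae_restrict_iff' hT).2 (.of_forall hnonneg))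
          ((integrableOn_inv_norm_punctured_disc _).const_mul _)
          ((ae_restrict_iff' hT).2 (.of_forall fun w hw ↦
            neg_log_rpow_div_le (neg_nonpos.2 N.cast_nonneg) hz1 hw.1 hw.2))
    _ = 2 * Real.pi * (-Real.log ‖z‖) ^ (-(N : ℝ)) := by
        rw [integral_const_mul, integral_inv_norm_punctured_disc (by positivity)]
        field_simp
end

section
/- Let N ≥ 0 be an integer and let z ∈ ℂ with 0 < |z| ≤ 1/2. Then ∫_{ {w ∈ ℂ : |w − z| ≤ |z|/2} } (−log|w|)^{−N} / ( |z − w| · |w| ) dλ(w) ≤ 2π · (−log(3|z|/2))^{−N}. (Note that on this region |z|/2 ≤ |w| ≤ 3|z|/2 ≤ 3/4 < 1, so −log|w| ≥ −log(3|z|/2) > 0.) -/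
/-!
On the disc `|w - z| ≤ |z|/2` we have `|z|/2 ≤ |w| ≤ 3|z|/2 < 1`, so the factor
`(-log |w|)^(-N) / |w|` is at most `(2 / |z|) (-log (3|z|/2))^(-N)`. What remains is
`∫_{|w - z| ≤ r} |w - z|⁻¹ dλ(w) = 2πr` with `r = |z|/2`, which is the polar-coordinates
formula `∫_{ℂ} f(|w|) dλ(w) = 2π ∫_0^∞ f(t) t dt`.
-/

open MeasureTheory Metric Set
open scoped Real

lemma closedBall_indicator_inv_norm_eq (r : ℝ) :
    (closedBall (0 : ℂ) r).indicator (fun w => ‖w‖⁻¹) = fun w => (Iic r).indicator (·⁻¹) ‖w‖ := by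
  ext w
  simp only [indicator, mem_closedBall_zero_iff, mem_Iic]

lemma pow_finrank_complex_smul_indicator_inv (r : ℝ) {t : ℝ} (ht : t ∈ Ioi 0) :
    t ^ (Module.finrank ℝ ℂ - 1) • (Iic r).indicator (·⁻¹) t = (Iic r).indicator 1 t := by
  by_cases htr : t ∈ Iic r <;> simp [htr, (mem_Ioi.1 ht).ne']

lemma integrable_closedBall_indicator_inv_norm (r : ℝ) :
    Integrable ((closedBall (0 : ℂ) r).indicator fun w => ‖w‖⁻¹) := by
  rw [closedBall_indicator_inv_norm_eq, integrable_fun_norm_addHaar,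
    integrableOn_congr_fun (fun t ht => pow_finrank_complex_smul_indicator_inv r ht)
      measurableSet_Ioi,
    IntegrableOn, integrable_indicator_iff measurableSet_Iic, IntegrableOn,
    Measure.restrict_restrict' measurableSet_Ioi, Iic_inter_Ioi]
  exact integrableOn_const (by simp)

lemma integral_closedBall_indicator_inv_norm {r : ℝ} (hr : 0 ≤ r) :
    ∫ w, (closedBall (0 : ℂ) r).indicator (fun w => ‖w‖⁻¹) w = 2 * π * r := by
  rw [closedBall_indicator_inv_norm_eq, integral_fun_norm_addHaar,
    setIntegral_congr_fun measurableSet_Ioi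
      (fun t ht => pow_finrank_complex_smul_indicator_inv r ht),
    setIntegral_indicator measurableSet_Iic, Ioi_inter_Iic]
  simp [hr, Measure.real, mul_assoc]

lemma closedBall_indicator_inv_norm_sub_eq (z : ℂ) (r : ℝ) :
    (closedBall z r).indicator (fun w => ‖w - z‖⁻¹) =
      fun w => (closedBall (0 : ℂ) r).indicator (fun u => ‖u‖⁻¹) (w - z) := by
  ext w
  simp only [indicator, mem_closedBall, dist_eq_norm, sub_zero]

lemma integrableOn_closedBall_inv_norm_sub (z : ℂ) (r : ℝ) :
    IntegrableOn (fun w => ‖w - z‖⁻¹) (closedBall z r) := by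
  rw [← integrable_indicator_iff measurableSet_closedBall, closedBall_indicator_inv_norm_sub_eq]
  exact (integrable_closedBall_indicator_inv_norm r).comp_sub_right z

lemma setIntegral_closedBall_inv_norm_sub (z : ℂ) {r : ℝ} (hr : 0 ≤ r) :
    ∫ w in closedBall z r, ‖w - z‖⁻¹ = 2 * π * r := by
  rw [← integral_indicator measurableSet_closedBall, closedBall_indicator_inv_norm_sub_eq,
    integral_sub_right_eq_self (fun u => (closedBall (0 : ℂ) r).indicator (fun u => ‖u‖⁻¹) u),
    integral_closedBall_indicator_inv_norm hr]

lemma norm_mem_Icc_of_mem_closedBall_half {E : Type*} [SeminormedAddCommGroup E] {z w : E}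
    (hw : w ∈ closedBall z (‖z‖ / 2)) : ‖w‖ ∈ Icc (‖z‖ / 2) (3 * ‖z‖ / 2) := by
  rw [mem_closedBall, dist_eq_norm] at hw
  have hz : ‖z‖ ≤ ‖w - z‖ + ‖w‖ := norm_le_norm_sub_add z w |>.trans_eq (by rw [norm_sub_rev])
  have hw' : ‖w‖ ≤ ‖w - z‖ + ‖z‖ := norm_le_norm_sub_add w z |>.trans_eq (by rw [norm_sub_rev])
  constructor <;> linarith

lemma neg_log_rpow_le_neg_log_rpow {a b s : ℝ} (ha : 0 < a) (hab : a ≤ b) (hb : b < 1)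
    (hs : s ≤ 0) : (-Real.log a) ^ s ≤ (-Real.log b) ^ s :=
  Real.rpow_le_rpow_of_nonpos (by linarith [Real.log_neg (ha.trans_le hab) hb])
    (by linarith [Real.log_le_log ha hab]) hs

lemma neg_log_rpow_div_mem_Icc {s : ℝ} (hs : s ≤ 0) {z w : ℂ} (hz0 : 0 < ‖z‖)
    (hz : ‖z‖ ≤ 1 / 2) (hw : w ∈ closedBall z (‖z‖ / 2)) :
    (-Real.log ‖w‖) ^ s / (‖z - w‖ * ‖w‖) ∈
      Icc 0 ((-Real.log (3 * ‖z‖ / 2)) ^ s * (2 / ‖z‖) * ‖w - z‖⁻¹) := by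
  obtain ⟨hw_lower, hw_upper⟩ := norm_mem_Icc_of_mem_closedBall_half hw
  have hw0 : 0 < ‖w‖ := by linarith
  have hlog' : 0 ≤ -Real.log (3 * ‖z‖ / 2) :=
    neg_nonneg.2 (Real.log_nonpos (by positivity) (by linarith))
  have hlog : 0 ≤ -Real.log ‖w‖ := hlog'.trans (neg_le_neg (Real.log_le_log hw0 hw_upper))
  have hrewrite : (-Real.log ‖w‖) ^ s / (‖z - w‖ * ‖w‖) =
      (-Real.log ‖w‖) ^ s * ‖w‖⁻¹ * ‖w - z‖⁻¹ := by
    rw [norm_sub_rev, div_eq_mul_inv, mul_inv]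
    ring
  have hinv : ‖w‖⁻¹ ≤ 2 / ‖z‖ := by
    rw [← inv_div]
    exact inv_anti₀ (by positivity) hw_lower
  have hnum := neg_log_rpow_le_neg_log_rpow hw0 hw_upper (by linarith) hs
  refine ⟨by positivity, ?_⟩
  rw [hrewrite]
  gcongr ?_ * ?_ * _

theorem statement9 (N : ℕ) (z : ℂ) (hz0 : 0 < ‖z‖) (hz : ‖z‖ ≤ 1 / 2) :
    (∫ w in {w : ℂ | ‖w - z‖ ≤ ‖z‖ / 2},
        (-Real.log ‖w‖) ^ (-(N : ℝ)) / (‖z - w‖ * ‖w‖)) ≤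
      2 * Real.pi * (-Real.log (3 * ‖z‖ / 2)) ^ (-(N : ℝ)) := by
  have hdisc : {w : ℂ | ‖w - z‖ ≤ ‖z‖ / 2} = closedBall z (‖z‖ / 2) := by
    ext w
    simp [dist_eq_norm]
  have hbound (w : ℂ) (hw : w ∈ closedBall z (‖z‖ / 2)) :=
    neg_log_rpow_div_mem_Icc (s := -(N : ℝ)) (by simp) hz0 hz hw
  set C := (-Real.log (3 * ‖z‖ / 2)) ^ (-(N : ℝ))
  rw [hdisc]
  calc _ ≤ ∫ w in closedBall z (‖z‖ / 2), C * (2 / ‖z‖) * ‖w - z‖⁻¹ :=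
        integral_mono_of_nonneg
          ((ae_restrict_mem measurableSet_closedBall).mono fun w hw => (hbound w hw).1)
          ((integrableOn_closedBall_inv_norm_sub z _).const_mul _)
          ((ae_restrict_mem measurableSet_closedBall).mono fun w hw => (hbound w hw).2)
    _ = C * (2 / ‖z‖) * (2 * π * (‖z‖ / 2)) := by
        rw [integral_const_mul, setIntegral_closedBall_inv_norm_sub z (by positivity)]
    _ = 2 * π * C := by field_simp
end
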